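/- arXiv:2309.02441 — 3 statements merged into one kernel-verified Lean document; each statement's English description precedes it below -/
import Mathlib

section
/- Let v1,v2,v3,v4 ∈ ℝ² form a convex quadrilateral in counterclockwise cyclic order and let Q be their convex hull. Then for every p ∈ Q there exist α, β, γ ∈ [0,1] such that p = (1−γ)·((1−α)v4 + α v1) + γ·((1−β)v2 + β v3) and d1(p)·(1−γ)α − d2(p)·γ(1−β) + d3(p)·γβ − d4(p)·(1−γ)(1−α) = 0. -/
open Matrix

/-- Signed area of the triangle `(a,b,c)` in the plane. -/
noncomputable def sArea (a b c : EuclideanSpace ℝ (Fin 2)) : ℝ :=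
  ((b 0 - a 0) * (c 1 - a 1) - (b 1 - a 1) * (c 0 - a 0)) / 2

/-- `v` lists the vertices of a convex quadrilateral in counterclockwise cyclic order. -/
def ConvexCCW (v : Fin 4 → EuclideanSpace ℝ (Fin 2)) : Prop :=
  ∀ i : Fin 4, 0 < sArea (v i) (v (i + 1)) (v (i + 2))

/-!
Let `W` be the set of convex weights `w` with `∑ wᵢ vᵢ = p`, and let
`F w = d₀ w₀ - d₁ w₁ + d₂ w₂ - d₃ w₃`. Since `W` is convex and `F` is continuous, it suffices to
find weights in `W` on which `F` is `≥ 0` and others on which it is `≤ 0`. For `w ∈ W` we have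
`∑ wᵢ (p - vᵢ) = 0`, so if `w₁ = 0` or `w₃ = 0` the triangle inequality gives `F w ≥ 0`, and if
`w₀ = 0` or `w₂ = 0` it gives `F w ≤ 0`. Weights of both kinds exist because the quadrilateral is
convex: its vertices satisfy the affine dependence `S₁ v₀ - S₂ v₁ + S₃ v₂ - S₀ v₃ = 0`, where
`Sᵢ = S(vᵢ, vᵢ₊₁, vᵢ₊₂) > 0`, and moving any weights along it in either direction until a
coordinate vanishes (the Carathéodory reduction step) kills `w₁` or `w₃`, resp. `w₀` or `w₂`.
Then `γ = w₁ + w₂`, and `α`, `β` split the pairs `(w₀, w₃)` and `(w₂, w₁)`.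
-/

open Set Finset

theorem exists_mem_Icc_add_mul_eq {a b : ℝ} (ha : 0 ≤ a) (hb : 0 ≤ b) :
    ∃ t ∈ Icc (0 : ℝ) 1, (a + b) * t = a := by
  rcases (add_nonneg ha hb).eq_or_lt with hab | hab
  · exact ⟨0, left_mem_Icc.2 zero_le_one, by linarith⟩
  · exact ⟨a / (a + b), ⟨by positivity, (div_le_one hab).2 (by linarith)⟩, by field_simp⟩

variable {ι E : Type*} [Fintype ι]

section Module

variable [AddCommGroup E] [Module ℝ E]

def convexWeights (v : ι → E) (p : E) : Set (ι → ℝ) :=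
  {w | w ∈ stdSimplex ℝ ι ∧ ∑ i, w i • v i = p}

theorem convexHull_range_eq_image_stdSimplex (v : ι → E) :
    convexHull ℝ (range v) = (fun w : ι → ℝ ↦ ∑ i, w i • v i) '' stdSimplex ℝ ι := by
  classical
  have hmap : (fun w : ι → ℝ ↦ ∑ i, w i • v i) = Fintype.linearCombination ℝ v := by
    ext w; simp [Fintype.linearCombination_apply]
  rw [hmap, ← convexHull_basis_eq_stdSimplex, LinearMap.image_convexHull, ← Set.range_comp]
  congr 2
  funext i
  simp [Fintype.linearCombination_apply, ite_smul]

theorem convexWeights_nonempty {v : ι → E} {p : E} (hp : p ∈ convexHull ℝ (range v)) :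
    (convexWeights v p).Nonempty := by
  rw [convexHull_range_eq_image_stdSimplex] at hp
  exact hp

theorem convex_convexWeights (v : ι → E) (p : E) : Convex ℝ (convexWeights v p) := by
  convert (convex_stdSimplex ℝ ι).inter
    ((convex_singleton p).linear_preimage (Fintype.linearCombination ℝ v)) using 1
  ext w
  simp [convexWeights, Fintype.linearCombination_apply]

theorem sum_smul_sub_eq_zero_of_mem_convexWeights {v : ι → E} {p : E} {w : ι → ℝ}
    (hw : w ∈ convexWeights v p) : ∑ i, w i • (p - v i) = 0 := by
  obtain ⟨⟨-, hw_sum⟩, hw_p⟩ := hw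
  simp [smul_sub, Finset.sum_sub_distrib, ← Finset.sum_smul, hw_sum, hw_p]

theorem exists_mem_convexWeights_eq_zero {v : ι → E} {p : E} {w δ : ι → ℝ}
    (hw : w ∈ convexWeights v p) (hδ_sum : ∑ i, δ i = 0) (hδ_comb : ∑ i, δ i • v i = 0)
    (hδ_neg : ∃ i, δ i < 0) : ∃ u ∈ convexWeights v p, ∃ i, δ i < 0 ∧ u i = 0 := by
  classical
  obtain ⟨⟨hw_nonneg, hw_sum⟩, hw_p⟩ := hw
  obtain ⟨j, hj, hj_min⟩ := ({i | δ i < 0} : Finset ι).exists_min_image (fun i ↦ w i / -δ i)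
    (Finset.filter_nonempty_iff.2 (by simpa using hδ_neg))
  rw [Finset.mem_filter] at hj
  -- the largest step along `δ` that keeps all weights nonnegative
  set t := w j / -δ j
  have ht : 0 ≤ t := div_nonneg (hw_nonneg j) (by linarith [hj.2])
  refine ⟨w + t • δ, ⟨⟨fun i ↦ ?_, ?_⟩, ?_⟩, j, hj.2, ?_⟩
  · by_cases hi : δ i < 0
    · have ht_le := hj_min i (by simp [hi])
      rw [le_div_iff₀ (by linarith)] at ht_le
      simp only [Pi.add_apply, Pi.smul_apply, smul_eq_mul]
      linarith
    · simp only [Pi.add_apply, Pi.smul_apply, smul_eq_mul]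
      nlinarith [hw_nonneg i]
  · simp [Finset.sum_add_distrib, ← Finset.mul_sum, hδ_sum, hw_sum]
  · simp [add_smul, Finset.sum_add_distrib, mul_smul, ← Finset.smul_sum, hδ_comb, hw_p]
  · simp only [Pi.add_apply, Pi.smul_apply, smul_eq_mul, t]
    field_simp [hj.2.ne]
    ring

end Module

theorem mul_norm_le_of_smul_add_smul_add_smul_eq_zero [SeminormedAddCommGroup E]
    [NormedSpace ℝ E] {a b c : ℝ} {x y z : E} (ha : 0 ≤ a) (hb : 0 ≤ b) (hc : 0 ≤ c)
    (h : a • x + b • y + c • z = 0) : ‖y‖ * b ≤ ‖x‖ * a + ‖z‖ * c := by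
  have hy : b • y = -(a • x + c • z) := by linear_combination (norm := module) h
  calc ‖y‖ * b = ‖b • y‖ := by rw [norm_smul, Real.norm_of_nonneg hb, mul_comm]
    _ ≤ ‖a • x‖ + ‖c • z‖ := by rw [hy, norm_neg]; exact norm_add_le _ _
    _ = ‖x‖ * a + ‖z‖ * c := by
      rw [norm_smul, norm_smul, Real.norm_of_nonneg ha, Real.norm_of_nonneg hc, mul_comm a,
        mul_comm c]

section Quadrilateral

variable [SeminormedAddCommGroup E] [NormedSpace ℝ E]

def alternatingMoment (v : Fin 4 → E) (p : E) (w : Fin 4 → ℝ) : ℝ :=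
  ‖p - v 0‖ * w 0 - ‖p - v 1‖ * w 1 + ‖p - v 2‖ * w 2 - ‖p - v 3‖ * w 3

theorem alternatingMoment_nonneg {v : Fin 4 → E} {p : E} {w : Fin 4 → ℝ}
    (hw : w ∈ convexWeights v p) (h : w 1 = 0 ∨ w 3 = 0) : 0 ≤ alternatingMoment v p w := by
  have hw_nonneg := hw.1.1
  have hsum := sum_smul_sub_eq_zero_of_mem_convexWeights hw
  rw [Fin.sum_univ_four] at hsum
  unfold alternatingMoment
  rcases h with h | h <;> rw [h] at hsum ⊢
  · have := mul_norm_le_of_smul_add_smul_add_smul_eq_zero (hw_nonneg 0) (hw_nonneg 3)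
      (hw_nonneg 2) (x := p - v 0) (y := p - v 3) (z := p - v 2)
      (by linear_combination (norm := module) hsum)
    linarith
  · have := mul_norm_le_of_smul_add_smul_add_smul_eq_zero (hw_nonneg 0) (hw_nonneg 1)
      (hw_nonneg 2) (x := p - v 0) (y := p - v 1) (z := p - v 2)
      (by linear_combination (norm := module) hsum)
    linarith

theorem alternatingMoment_nonpos {v : Fin 4 → E} {p : E} {w : Fin 4 → ℝ}
    (hw : w ∈ convexWeights v p) (h : w 0 = 0 ∨ w 2 = 0) : alternatingMoment v p w ≤ 0 := by
  have hw_nonneg := hw.1.1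
  have hsum := sum_smul_sub_eq_zero_of_mem_convexWeights hw
  rw [Fin.sum_univ_four] at hsum
  unfold alternatingMoment
  rcases h with h | h <;> rw [h] at hsum ⊢
  · have := mul_norm_le_of_smul_add_smul_add_smul_eq_zero (hw_nonneg 1) (hw_nonneg 2)
      (hw_nonneg 3) (x := p - v 1) (y := p - v 2) (z := p - v 3)
      (by linear_combination (norm := module) hsum)
    linarith
  · have := mul_norm_le_of_smul_add_smul_add_smul_eq_zero (hw_nonneg 1) (hw_nonneg 0)
      (hw_nonneg 3) (x := p - v 1) (y := p - v 0) (z := p - v 3)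
      (by linear_combination (norm := module) hsum)
    linarith

theorem exists_alternatingMoment_eq_zero {v : Fin 4 → E} {p : E}
    (hp : p ∈ convexHull ℝ (range v)) {δ : Fin 4 → ℝ} (hδ_sum : ∑ i, δ i = 0)
    (hδ_comb : ∑ i, δ i • v i = 0)
    (hδ0 : 0 < δ 0) (hδ1 : δ 1 < 0) (hδ2 : 0 < δ 2) (hδ3 : δ 3 < 0) :
    ∃ w ∈ convexWeights v p, alternatingMoment v p w = 0 := by
  obtain ⟨w, hw⟩ := convexWeights_nonempty hp
  obtain ⟨a, ha, i, hi, hai⟩ := exists_mem_convexWeights_eq_zero hw hδ_sum hδ_comb ⟨1, hδ1⟩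
  obtain ⟨b, hb, j, hj, hbj⟩ := exists_mem_convexWeights_eq_zero hw (δ := -δ)
    (by simp [hδ_sum]) (by simp [neg_smul, hδ_comb]) ⟨0, by simpa using hδ0⟩
  have ha_nonneg : 0 ≤ alternatingMoment v p a := alternatingMoment_nonneg ha (by
    fin_cases i <;> simp_all <;> linarith)
  have hb_nonpos : alternatingMoment v p b ≤ 0 := alternatingMoment_nonpos hb (by
    fin_cases j <;> simp_all <;> linarith)
  have hcont : Continuous (alternatingMoment v p) := by unfold alternatingMoment; fun_prop
  obtain ⟨u, hu, hu0⟩ := (convex_convexWeights v p).isPreconnected.intermediate_value hb ha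
    hcont.continuousOn ⟨hb_nonpos, ha_nonneg⟩
  exact ⟨u, hu, hu0⟩

end Quadrilateral

theorem sArea_sub_add_sub (a b c d : EuclideanSpace ℝ (Fin 2)) :
    sArea b c d - sArea c d a + sArea d a b - sArea a b c = 0 := by
  simp only [sArea]; ring

theorem sArea_smul_sub_add_sub (a b c d : EuclideanSpace ℝ (Fin 2)) :
    sArea b c d • a - sArea c d a • b + sArea d a b • c - sArea a b c • d = 0 := by
  ext i
  fin_cases i <;> simp [sArea] <;> ring

theorem ConvexCCW.exists_alternatingMoment_eq_zero {v : Fin 4 → EuclideanSpace ℝ (Fin 2)}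
    (hccw : ConvexCCW v) {p : EuclideanSpace ℝ (Fin 2)}
    (hp : p ∈ convexHull ℝ {v 0, v 1, v 2, v 3}) :
    ∃ w ∈ convexWeights v p, alternatingMoment v p w = 0 := by
  have h0 : 0 < sArea (v 0) (v 1) (v 2) := hccw 0
  have h1 : 0 < sArea (v 1) (v 2) (v 3) := hccw 1
  have h2 : 0 < sArea (v 2) (v 3) (v 0) := hccw 2
  have h3 : 0 < sArea (v 3) (v 0) (v 1) := hccw 3
  have hrange : range v = {v 0, v 1, v 2, v 3} := by
    ext; simp [Fin.exists_fin_succ, eq_comm]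
  refine _root_.exists_alternatingMoment_eq_zero (hrange ▸ hp)
    (δ := ![sArea (v 1) (v 2) (v 3), -sArea (v 2) (v 3) (v 0), sArea (v 3) (v 0) (v 1),
      -sArea (v 0) (v 1) (v 2)]) ?_ ?_ ?_ ?_ ?_ ?_
  · simp only [Fin.isValue, Fin.sum_univ_four, cons_val_zero, cons_val_one, Matrix.cons_val]
    linarith [sArea_sub_add_sub (v 0) (v 1) (v 2) (v 3)]
  · simp only [Fin.isValue, Fin.sum_univ_four, cons_val_zero, cons_val_one, neg_smul,
      Matrix.cons_val]
    linear_combination (norm := module) sArea_smul_sub_add_sub (v 0) (v 1) (v 2) (v 3)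
  all_goals simpa

/-- For every point `p` of a convex quadrilateral `Q = conv{v₁,v₂,v₃,v₄}`
(counterclockwise order) there exist `α, β, γ ∈ [0,1]` with
`p = (1-γ)((1-α)v₄ + αv₁) + γ((1-β)v₂ + βv₃)` and
`d₁(p)(1-γ)α - d₂(p)γ(1-β) + d₃(p)γβ - d₄(p)(1-γ)(1-α) = 0`,
where `dᵢ(p) = ‖p - vᵢ‖`. -/
theorem moment_condition_exists (v : Fin 4 → EuclideanSpace ℝ (Fin 2))
    (hccw : ConvexCCW v) (p : EuclideanSpace ℝ (Fin 2))
    (hp : p ∈ convexHull ℝ {v 0, v 1, v 2, v 3}) :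
    ∃ α β γ : ℝ, α ∈ Set.Icc (0 : ℝ) 1 ∧ β ∈ Set.Icc (0 : ℝ) 1 ∧
      γ ∈ Set.Icc (0 : ℝ) 1 ∧
      p = (1 - γ) • ((1 - α) • v 3 + α • v 0) + γ • ((1 - β) • v 1 + β • v 2) ∧
      ‖p - v 0‖ * ((1 - γ) * α) - ‖p - v 1‖ * (γ * (1 - β)) +
        ‖p - v 2‖ * (γ * β) - ‖p - v 3‖ * ((1 - γ) * (1 - α)) = 0 := by
  obtain ⟨w, ⟨⟨hw, hw_sum⟩, hw_p⟩, hw_F⟩ := hccw.exists_alternatingMoment_eq_zero hp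
  rw [Fin.sum_univ_four] at hw_sum hw_p
  obtain ⟨α, hα, hα_w⟩ := exists_mem_Icc_add_mul_eq (hw 0) (hw 3)
  obtain ⟨β, hβ, hβ_w⟩ := exists_mem_Icc_add_mul_eq (hw 2) (hw 1)
  have hγ : 1 - (w 1 + w 2) = w 0 + w 3 := by linarith
  refine ⟨α, β, w 1 + w 2, hα, hβ, ⟨by linarith [hw 1, hw 2], by linarith [hw 0, hw 3]⟩, ?_, ?_⟩
  · rw [hγ, ← hw_p]
    linear_combination (norm := module) (-hα_w) • (v 0 - v 3) - hβ_w • (v 2 - v 1)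
  · rw [hγ]
    unfold alternatingMoment at hw_F
    linear_combination
      hw_F + (‖p - v 0‖ + ‖p - v 3‖) * hα_w + (‖p - v 1‖ + ‖p - v 2‖) * hβ_w
end

section
/- Let n ≥ 4, let 0 ≤ x1 < x2 < ⋯ < xn ≤ 1 and let p ∈ [x1, x2]. Define the n×n matrix whose first row is (1,1,…,1), whose second row has j-th entry x_j − p, whose third row has j-th entry (−1)^{j+1}|x_j − p|, and whose (k+3)-rd row (for k = 1,…,n−3) has entry 1 in columns k+2 and k+3 and entry 0 elsewhere. Then this matrix is invertible, and the unique solution φ ∈ ℝ^n of the linear system with right-hand side (1,0,0,…,0) is componentwise nonnegative. -/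
/-! Indices start at `0`. The rows `i ≥ 3` say `φ_{i-1} + φ_i = 0`, so `(-1)^j φ_j` is constant
for `j ≥ 2`. Adding rows `1` and `2` gives `∑ s_j (-1)^j φ_j = 0` with weights
`s_j = |x_j - p| + (-1)^j (x_j - p) ≥ 0`, which vanish for `j = 0, 1` because `x₀ ≤ p ≤ x₁` and
are positive for `j = 2` because `p < x₂`; hence `φ_j = 0` for `j ≥ 2`. What is left is the
`2 × 2` system `φ₀ + φ₁ = c`, `(x₀ - p) φ₀ + (x₁ - p) φ₁ = 0`, and Cramer's rule gives
`(x₁ - x₀) φ₀ = (x₁ - p) c` and `(x₁ - x₀) φ₁ = (p - x₀) c`. -/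

open Matrix

theorem Fin.neg_one_pow_mul_eq_of_add_eq_zero {R : Type*} [Ring R] {n : ℕ} {φ : Fin n → R}
    {i₀ : Fin n} (h : ∀ i j : Fin n, i₀ ≤ i → (j : ℕ) = i + 1 → φ i + φ j = 0)
    (j : Fin n) (hj : i₀ ≤ j) : (-1) ^ (j : ℕ) * φ j = (-1) ^ (i₀ : ℕ) * φ i₀ := by
  obtain ⟨j, hjn⟩ := j
  replace hj : (i₀ : ℕ) ≤ j := hj
  induction j, hj using Nat.le_induction with
  | base => rfl
  | succ k hk ih =>
    have hkn : k < n := by omega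
    rw [← ih hkn, eq_neg_of_add_eq_zero_right (h ⟨k, hkn⟩ ⟨k + 1, hjn⟩ hk rfl), pow_succ]
    noncomm_ring

section MomentMatrix

variable {n : ℕ} (x : Fin n → ℝ) (p : ℝ)

/-- Column `j` carries the paper's node `x_{j+1}`, hence the sign `(-1)^{(j+1)+1}`. -/
def momentMatrix : Matrix (Fin n) (Fin n) ℝ :=
  Matrix.of fun i j =>
    if (i : ℕ) = 0 then 1
    else if (i : ℕ) = 1 then x j - p
    else if (i : ℕ) = 2 then (-1) ^ ((j : ℕ) + 1 + 1) * |x j - p|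
    else if (j : ℕ) = (i : ℕ) - 1 ∨ (j : ℕ) = (i : ℕ) then 1 else 0

variable {x p} (φ : Fin n → ℝ) {i : Fin n}

lemma momentMatrix_mulVec_of_val_eq_zero (hi : (i : ℕ) = 0) :
    (momentMatrix x p *ᵥ φ) i = ∑ j, φ j := by
  simp [momentMatrix, mulVec, dotProduct, hi]

lemma momentMatrix_mulVec_of_val_eq_one (hi : (i : ℕ) = 1) :
    (momentMatrix x p *ᵥ φ) i = ∑ j, (x j - p) * φ j := by
  simp [momentMatrix, mulVec, dotProduct, hi]

lemma momentMatrix_mulVec_of_val_eq_two (hi : (i : ℕ) = 2) :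
    (momentMatrix x p *ᵥ φ) i = ∑ j : Fin n, (-1) ^ (j : ℕ) * |x j - p| * φ j := by
  simp [momentMatrix, mulVec, dotProduct, hi, pow_succ]

lemma momentMatrix_mulVec_of_three_le_val (hi : 3 ≤ (i : ℕ)) :
    (momentMatrix x p *ᵥ φ) i = φ ⟨i - 1, by omega⟩ + φ i := by
  rw [mulVec, dotProduct, Fintype.sum_eq_add ⟨i - 1, by omega⟩ i (by simp [Fin.ext_iff]; omega)]
  · simp [momentMatrix, show (i : ℕ) ≠ 0 by omega, show (i : ℕ) ≠ 1 by omega,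
      show (i : ℕ) ≠ 2 by omega]
  · rintro j ⟨hj₁, hj₂⟩
    rw [Ne, Fin.ext_iff] at hj₁ hj₂
    simp [momentMatrix, show (i : ℕ) ≠ 0 by omega, show (i : ℕ) ≠ 1 by omega,
      show (i : ℕ) ≠ 2 by omega, hj₁, hj₂]

lemma neg_one_pow_mul_eq_of_momentMatrix_mulVec (hn : 2 < n)
    (hφ : ∀ i : Fin n, 3 ≤ (i : ℕ) → (momentMatrix x p *ᵥ φ) i = 0)
    (j : Fin n) (hj : 2 ≤ (j : ℕ)) : (-1) ^ (j : ℕ) * φ j = φ ⟨2, hn⟩ := by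
  refine (Fin.neg_one_pow_mul_eq_of_add_eq_zero (i₀ := ⟨2, hn⟩) (fun i k hi hk => ?_) j hj).trans
    (by simp)
  have hk3 : 3 ≤ (k : ℕ) := by simp [Fin.le_def] at hi; omega
  rw [← hφ k hk3, momentMatrix_mulVec_of_three_le_val φ hk3]
  congr
  simp [hk]

theorem eq_zero_of_momentMatrix_mulVec (hn : 2 < n) (hp₀ : x ⟨0, by omega⟩ ≤ p)
    (hp₁ : p ≤ x ⟨1, by omega⟩) (hp₂ : p < x ⟨2, hn⟩)
    (hφ : ∀ i : Fin n, (i : ℕ) ≠ 0 → (momentMatrix x p *ᵥ φ) i = 0)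
    (j : Fin n) (hj : 2 ≤ (j : ℕ)) : φ j = 0 := by
  set s : Fin n → ℝ := fun j => |x j - p| + (-1) ^ (j : ℕ) * (x j - p)
  have hs_nonneg (j : Fin n) : 0 ≤ s j := by
    rcases neg_one_pow_eq_or ℝ (j : ℕ) with h | h <;>
      simp only [s, h] <;> linarith [neg_abs_le (x j - p), le_abs_self (x j - p)]
  have hs_low (j : Fin n) (hj : (j : ℕ) < 2) : s j = 0 := by
    obtain ⟨k, hk⟩ := j
    interval_cases k
    · simp [s, abs_of_nonpos (sub_nonpos.mpr hp₀)]
    · simp [s, abs_of_nonneg (sub_nonneg.mpr hp₁)]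
  have hs_pos : 0 < ∑ j, s j := by
    refine Finset.sum_pos' (fun j _ => hs_nonneg j) ⟨⟨2, hn⟩, Finset.mem_univ _, ?_⟩
    simpa [s, abs_of_pos (sub_pos.mpr hp₂)] using hp₂
  have hsum : ∑ j, s j * ((-1) ^ (j : ℕ) * φ j) = 0 := by
    have h₁ := hφ ⟨1, by omega⟩ one_ne_zero
    have h₂ := hφ ⟨2, hn⟩ two_ne_zero
    rw [momentMatrix_mulVec_of_val_eq_one φ rfl] at h₁
    rw [momentMatrix_mulVec_of_val_eq_two φ rfl] at h₂
    calc ∑ j, s j * ((-1) ^ (j : ℕ) * φ j)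
        = ∑ j, (x j - p) * φ j + ∑ j : Fin n, (-1) ^ (j : ℕ) * |x j - p| * φ j := by
          rw [← Finset.sum_add_distrib]
          refine Finset.sum_congr rfl fun k _ => ?_
          have hsq : ((-1 : ℝ) ^ (k : ℕ)) * (-1) ^ (k : ℕ) = 1 := by rw [← mul_pow]; simp
          linear_combination (x k - p) * φ k * hsq
      _ = 0 := by rw [h₁, h₂, add_zero]
  have h2 : φ ⟨2, hn⟩ = 0 := by
    have hterm (j : Fin n) : s j * ((-1) ^ (j : ℕ) * φ j) = s j * φ ⟨2, hn⟩ := by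
      rcases lt_or_ge (j : ℕ) 2 with hj | hj
      · simp [hs_low j hj]
      · rw [neg_one_pow_mul_eq_of_momentMatrix_mulVec φ hn (fun i hi => hφ i (by omega)) j hj]
    rw [Finset.sum_congr rfl fun j _ => hterm j, ← Finset.sum_mul] at hsum
    exact (mul_eq_zero.mp hsum).resolve_left hs_pos.ne'
  have := neg_one_pow_mul_eq_of_momentMatrix_mulVec φ hn (fun i hi => hφ i (by omega)) j hj
  rw [h2] at this
  exact (mul_eq_zero.mp this).resolve_left (pow_ne_zero _ (by norm_num))

theorem momentMatrix_mulVec_cramer (hn : 2 < n) (hp₀ : x ⟨0, by omega⟩ ≤ p)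
    (hp₁ : p ≤ x ⟨1, by omega⟩) (hp₂ : p < x ⟨2, hn⟩)
    (hφ : ∀ i : Fin n, (i : ℕ) ≠ 0 → (momentMatrix x p *ᵥ φ) i = 0) :
    (x ⟨1, by omega⟩ - x ⟨0, by omega⟩) * φ ⟨0, by omega⟩ =
        (x ⟨1, by omega⟩ - p) * (momentMatrix x p *ᵥ φ) ⟨0, by omega⟩ ∧
      (x ⟨1, by omega⟩ - x ⟨0, by omega⟩) * φ ⟨1, by omega⟩ =
        (p - x ⟨0, by omega⟩) * (momentMatrix x p *ᵥ φ) ⟨0, by omega⟩ := by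
  have hsupp := eq_zero_of_momentMatrix_mulVec φ hn hp₀ hp₁ hp₂ hφ
  have hsum (f : Fin n → ℝ) (hf : ∀ j : Fin n, 2 ≤ (j : ℕ) → f j = 0) :
      ∑ j, f j = f ⟨0, by omega⟩ + f ⟨1, by omega⟩ :=
    Fintype.sum_eq_add _ _ (by simp [Fin.ext_iff]) fun j hj => hf j <| by
      simp only [Ne, Fin.ext_iff] at hj; omega
  have h₀ := momentMatrix_mulVec_of_val_eq_zero (x := x) (p := p) φ (i := ⟨0, by omega⟩) rfl
  have h₁ := hφ ⟨1, by omega⟩ one_ne_zero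
  rw [hsum φ hsupp] at h₀
  rw [momentMatrix_mulVec_of_val_eq_one φ rfl,
    hsum _ fun j hj => by rw [hsupp j hj, mul_zero]] at h₁
  constructor
  · linear_combination -(x ⟨1, by omega⟩ - p) * h₀ - h₁
  · linear_combination h₁ - (p - x ⟨0, by omega⟩) * h₀

theorem isUnit_momentMatrix (hn : 2 < n) (hx₀₁ : x ⟨0, by omega⟩ < x ⟨1, by omega⟩)
    (hp₀ : x ⟨0, by omega⟩ ≤ p) (hp₁ : p ≤ x ⟨1, by omega⟩) (hp₂ : p < x ⟨2, hn⟩) :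
    IsUnit (momentMatrix x p) := by
  refine mulVec_injective_iff_isUnit.mp fun u v huv => ?_
  have hker : momentMatrix x p *ᵥ (u - v) = 0 := by rw [mulVec_sub, huv, sub_self]
  have hφ (i : Fin n) (_ : (i : ℕ) ≠ 0) : (momentMatrix x p *ᵥ (u - v)) i = 0 := by
    rw [hker, Pi.zero_apply]
  obtain ⟨h₀, h₁⟩ := momentMatrix_mulVec_cramer (u - v) hn hp₀ hp₁ hp₂ hφ
  rw [hker, Pi.zero_apply, mul_zero] at h₀ h₁
  have hx := (sub_pos.mpr hx₀₁).ne'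
  rw [← sub_eq_zero]
  funext j
  obtain ⟨_ | _ | k, hk⟩ := j
  · exact (mul_eq_zero.mp h₀).resolve_left hx
  · exact (mul_eq_zero.mp h₁).resolve_left hx
  · exact eq_zero_of_momentMatrix_mulVec _ hn hp₀ hp₁ hp₂ hφ _ (by simp)

theorem nonneg_of_momentMatrix_mulVec (hn : 2 < n) (hx₀₁ : x ⟨0, by omega⟩ < x ⟨1, by omega⟩)
    (hp₀ : x ⟨0, by omega⟩ ≤ p) (hp₁ : p ≤ x ⟨1, by omega⟩) (hp₂ : p < x ⟨2, hn⟩)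
    (hφ₀ : 0 ≤ (momentMatrix x p *ᵥ φ) ⟨0, by omega⟩)
    (hφ : ∀ i : Fin n, (i : ℕ) ≠ 0 → (momentMatrix x p *ᵥ φ) i = 0) (j : Fin n) :
    0 ≤ φ j := by
  obtain ⟨h₀, h₁⟩ := momentMatrix_mulVec_cramer φ hn hp₀ hp₁ hp₂ hφ
  have hx := sub_pos.mpr hx₀₁
  obtain ⟨_ | _ | k, hk⟩ := j
  · exact nonneg_of_mul_nonneg_right (h₀ ▸ mul_nonneg (sub_nonneg.mpr hp₁) hφ₀) hx
  · exact nonneg_of_mul_nonneg_right (h₁ ▸ mul_nonneg (sub_nonneg.mpr hp₀) hφ₀) hx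
  · exact (eq_zero_of_momentMatrix_mulVec φ hn hp₀ hp₁ hp₂ hφ _ (by simp)).ge

end MomentMatrix

/-- For `n ≥ 4` nodes `0 ≤ x₁ < ⋯ < xₙ ≤ 1` and `p ∈ [x₁, x₂]`, the `n×n`
matrix whose first row is all ones, whose second row is `xⱼ - p`, whose third row is
`(-1)^{j+1}|xⱼ - p|` (columns indexed `j = 1,…,n`), and whose `(k+3)`-rd row
(`k = 1,…,n-3`) has ones exactly in columns `k+2` and `k+3`, is invertible, and the
unique solution of the system with right-hand side `(1,0,…,0)` is componentwise
nonnegative. -/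
theorem moment_1d_n_nodes (n : ℕ) (hn : 4 ≤ n) (x : Fin n → ℝ) (hx : StrictMono x)
    (p : ℝ) (hp : p ∈ Set.Icc (x ⟨0, by omega⟩) (x ⟨1, by omega⟩)) :
    IsUnit (Matrix.of fun i j : Fin n =>
        if (i : ℕ) = 0 then (1 : ℝ)
        else if (i : ℕ) = 1 then x j - p
        else if (i : ℕ) = 2 then (-1) ^ ((j : ℕ) + 1 + 1) * |x j - p|
        else if (j : ℕ) = (i : ℕ) - 1 ∨ (j : ℕ) = (i : ℕ) then 1 else 0) ∧
    ∀ φ : Fin n → ℝ,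
      (Matrix.of fun i j : Fin n =>
          if (i : ℕ) = 0 then (1 : ℝ)
          else if (i : ℕ) = 1 then x j - p
          else if (i : ℕ) = 2 then (-1) ^ ((j : ℕ) + 1 + 1) * |x j - p|
          else if (j : ℕ) = (i : ℕ) - 1 ∨ (j : ℕ) = (i : ℕ) then 1 else 0).mulVec φ =
        (fun i : Fin n => if (i : ℕ) = 0 then (1 : ℝ) else 0) →
      ∀ i, 0 ≤ φ i := by
  obtain ⟨hp₀, hp₁⟩ := hp
  have hx₀₁ : x ⟨0, by omega⟩ < x ⟨1, by omega⟩ := hx (by simp [Fin.lt_def])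
  have hp₂ : p < x ⟨2, by omega⟩ := hp₁.trans_lt (hx (by simp [Fin.lt_def]))
  refine ⟨isUnit_momentMatrix (by omega) hx₀₁ hp₀ hp₁ hp₂, fun φ hφ => ?_⟩
  change momentMatrix x p *ᵥ φ = _ at hφ
  refine nonneg_of_momentMatrix_mulVec φ (by omega) hx₀₁ hp₀ hp₁ hp₂ (by simp [hφ]) fun i hi => ?_
  simp [hφ, hi]
end

section
/- Let v1 = (−1,−1), v2 = (1,−1), v3 = (1,1), v4 = (−1,1) be the vertices of the biunit square and let p = (x,y) with x, y ∈ (−1,1). Then the unique solution of the 4×4 linear system whose first two rows are the coordinates of (v1,v2,v3,v4), whose third row is (1,1,1,1), whose fourth row is (ρ1(p), −ρ2(p), ρ3(p), −ρ4(p)), and whose right-hand side is (x, y, 1, 0), is the vector of bilinear shape functions ((1−x)(1−y)/4, (1+x)(1−y)/4, (1+x)(1+y)/4, (1−x)(1+y)/4). -/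
open Matrix

/-- `hdist v i p`: Euclidean distance from `p` to the line through `v i` and `v (i+1)`. -/
noncomputable def hdist (v : Fin 4 → EuclideanSpace ℝ (Fin 2)) (i : Fin 4)
    (p : EuclideanSpace ℝ (Fin 2)) : ℝ :=
  Metric.infDist p (affineSpan ℝ {v i, v (i + 1)} : Set (EuclideanSpace ℝ (Fin 2)))

/-- `ρᵢ(p) = l_{i,i-1} l_{i,i+1} h_{i-1}(p) h_i(p)`. -/
noncomputable def rho (v : Fin 4 → EuclideanSpace ℝ (Fin 2)) (i : Fin 4)
    (p : EuclideanSpace ℝ (Fin 2)) : ℝ :=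
  ‖v i - v (i - 1)‖ * ‖v i - v (i + 1)‖ * hdist v (i - 1) p * hdist v i p

/-- Wachspress weight `wᵢ(p) = S(v_{i-1},v_i,v_{i+1}) / (S(p,v_{i-1},v_i) S(p,v_i,v_{i+1}))`. -/
noncomputable def wWach (v : Fin 4 → EuclideanSpace ℝ (Fin 2)) (i : Fin 4)
    (p : EuclideanSpace ℝ (Fin 2)) : ℝ :=
  sArea (v (i - 1)) (v i) (v (i + 1)) /
    (sArea p (v (i - 1)) (v i) * sArea p (v i) (v (i + 1)))

/-- Wachspress coordinate `φᵢ(p) = wᵢ(p) / (w₁(p)+w₂(p)+w₃(p)+w₄(p))`. -/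
noncomputable def wach (v : Fin 4 → EuclideanSpace ℝ (Fin 2)) (i : Fin 4)
    (p : EuclideanSpace ℝ (Fin 2)) : ℝ :=
  wWach v i p / (wWach v 0 p + wWach v 1 p + wWach v 2 p + wWach v 3 p)

/-- The vertices of the biunit square `[-1,1]²`. -/
noncomputable def biunitSquare : Fin 4 → EuclideanSpace ℝ (Fin 2) :=
  ![!₂[-1, -1], !₂[1, -1], !₂[1, 1], !₂[-1, 1]]

/-!
Every edge of the biunit square is axis-parallel of length 2, so for `p = (x, y)` inside the
square the edge distances are `1 ± x`, `1 ± y` and `ρᵢ(p) = 4 hᵢ₋₁(p) hᵢ(p)` is a product of the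
two factors among `1 ± x`, `1 ± y` that vanish at `vᵢ`. Hence `ρᵢ φᵢ = (1 - x²)(1 - y²)` for
every bilinear shape function `φᵢ`, and the alternating fourth equation holds. The first three
equations determine `φ` up to a multiple of `(1, -1, 1, -1)`, on which the fourth row takes the
value `ρ₀ + ρ₁ + ρ₂ + ρ₃ = 16 ≠ 0`; this gives uniqueness.
-/

open Metric

lemma dist_eq_abs_sub_of_apply_add_one_eq {p q : EuclideanSpace ℝ (Fin 2)} {j : Fin 2}
    (h : p (j + 1) = q (j + 1)) : dist p q = |p j - q j| := by
  rw [EuclideanSpace.dist_eq, ← Real.sqrt_sq_eq_abs]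
  fin_cases j <;> simp_all [Fin.sum_univ_two, Real.dist_eq, sq_abs]

lemma infDist_affineSpan_pair_of_apply_eq {a b : EuclideanSpace ℝ (Fin 2)} {j : Fin 2} {c : ℝ}
    (ha : a j = c) (hb : b j = c) (hab : a (j + 1) ≠ b (j + 1)) (p : EuclideanSpace ℝ (Fin 2)) :
    infDist p (line[ℝ, a, b] : Set (EuclideanSpace ℝ (Fin 2))) = |p j - c| := by
  apply le_antisymm
  · set q := AffineMap.lineMap a b ((p (j + 1) - a (j + 1)) / (b (j + 1) - a (j + 1)))
    have hqj : q j = c := by simp [q, AffineMap.lineMap_apply, ha, hb]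
    have hqk : p (j + 1) = q (j + 1) := by
      simp [q, AffineMap.lineMap_apply]
      field_simp [sub_ne_zero.2 hab.symm]
      ring
    calc infDist p _ ≤ dist p q :=
          infDist_le_dist_of_mem (AffineMap.lineMap_mem_affineSpan_pair _ a b)
      _ = |p j - c| := by rw [dist_eq_abs_sub_of_apply_add_one_eq hqk, hqj]
  · refine (le_infDist ⟨a, left_mem_affineSpan_pair ℝ a b⟩).2 fun q hq => ?_
    obtain ⟨r, rfl⟩ := mem_affineSpan_pair_iff_exists_lineMap_eq.1 hq
    simpa [AffineMap.lineMap_apply, ha, hb, Real.dist_eq] using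
      PiLp.dist_apply_le p (AffineMap.lineMap a b r) j

lemma hdist_biunitSquare (p : EuclideanSpace ℝ (Fin 2)) :
    hdist biunitSquare 0 p = |1 + p 1| ∧ hdist biunitSquare 1 p = |1 - p 0| ∧
      hdist biunitSquare 2 p = |1 - p 1| ∧ hdist biunitSquare 3 p = |1 + p 0| := by
  refine ⟨(infDist_affineSpan_pair_of_apply_eq (j := 1) (c := -1) ?_ ?_ ?_ p).trans ?_,
    (infDist_affineSpan_pair_of_apply_eq (j := 0) (c := 1) ?_ ?_ ?_ p).trans ?_,
    (infDist_affineSpan_pair_of_apply_eq (j := 1) (c := 1) ?_ ?_ ?_ p).trans ?_,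
    (infDist_affineSpan_pair_of_apply_eq (j := 0) (c := -1) ?_ ?_ ?_ p).trans ?_⟩
  all_goals simp [biunitSquare]
  all_goals norm_num [abs_sub_comm, add_comm]

lemma norm_biunitSquare_sub_add_one (i : Fin 4) : ‖biunitSquare i - biunitSquare (i + 1)‖ = 2 := by
  rw [EuclideanSpace.norm_eq, Real.sqrt_eq_iff_mul_self_eq_of_pos two_pos]
  fin_cases i <;> simp [biunitSquare, Fin.sum_univ_two] <;> norm_num

lemma norm_biunitSquare_sub_sub_one (i : Fin 4) : ‖biunitSquare i - biunitSquare (i - 1)‖ = 2 := by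
  simpa [norm_sub_rev] using norm_biunitSquare_sub_add_one (i - 1)

lemma rho_biunitSquare (i : Fin 4) (p : EuclideanSpace ℝ (Fin 2)) :
    rho biunitSquare i p = 4 * (hdist biunitSquare (i - 1) p * hdist biunitSquare i p) := by
  rw [rho, norm_biunitSquare_sub_sub_one, norm_biunitSquare_sub_add_one]
  ring

lemma biunitSquare_fst : (fun i => biunitSquare i 0) = ![-1, 1, 1, -1] := by
  ext i; fin_cases i <;> simp [biunitSquare]

lemma biunitSquare_snd : (fun i => biunitSquare i 1) = ![-1, -1, 1, 1] := by
  ext i; fin_cases i <;> simp [biunitSquare]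

lemma mulVec_eq_iff_eq_bilinear (x y : ℝ) (φ : Fin 4 → ℝ) :
    (Matrix.of ![![-1, 1, 1, -1], ![-1, -1, 1, 1], fun _ => 1,
        ![4 * ((1 + x) * (1 + y)), -(4 * ((1 + y) * (1 - x))),
          4 * ((1 - x) * (1 - y)), -(4 * ((1 - y) * (1 + x)))]] :
        Matrix (Fin 4) (Fin 4) ℝ) *ᵥ φ = ![x, y, 1, 0] ↔
      φ = ![(1 - x) * (1 - y) / 4, (1 + x) * (1 - y) / 4,
        (1 + x) * (1 + y) / 4, (1 - x) * (1 + y) / 4] := by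
  simp only [funext_iff, Fin.forall_fin_succ, IsEmpty.forall_iff, mulVec, dotProduct,
    Fin.sum_univ_four, of_apply, Fin.isValue, cons_val', cons_val_zero, cons_val_fin_one, neg_mul,
    one_mul, cons_val_one, cons_val, Fin.succ_zero_eq_one, Fin.succ_one_eq_two, Fin.reduceSucc,
    and_true]
  constructor
  · rintro ⟨e0, e1, e2, e3⟩
    -- the coefficients are the rows of the inverse matrix
    refine ⟨?_, ?_, ?_, ?_⟩
    · linear_combination ((y - 1) / 4) * e0 + ((x - 1) / 4) * e1 + ((1 - x * y) / 4) * e2 +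
        (1 / 16) * e3
    · linear_combination ((1 - y) / 4) * e0 + (-(1 + x) / 4) * e1 + ((1 + x * y) / 4) * e2 +
        (-1 / 16) * e3
    · linear_combination ((1 + y) / 4) * e0 + ((1 + x) / 4) * e1 + ((1 - x * y) / 4) * e2 +
        (1 / 16) * e3
    · linear_combination (-(1 + y) / 4) * e0 + ((1 - x) / 4) * e1 + ((1 + x * y) / 4) * e2 +
        (-1 / 16) * e3
  · rintro ⟨h0, h1, h2, h3⟩
    rw [h0, h1, h2, h3]
    exact ⟨by ring, by ring, by ring, by ring⟩

/-- On the biunit square with vertices `(-1,-1),(1,-1),(1,1),(-1,1)` and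
`p = (x,y)`, `x, y ∈ (-1,1)`, the unique solution of the 4×4 system with rows the
vertex coordinates, `(1,1,1,1)` and `(ρ₁(p), -ρ₂(p), ρ₃(p), -ρ₄(p))`, and right-hand
side `(x, y, 1, 0)`, is the vector of bilinear shape functions. -/
theorem wachspress_biunit_square (x y : ℝ)
    (hx : x ∈ Set.Ioo (-1 : ℝ) 1) (hy : y ∈ Set.Ioo (-1 : ℝ) 1)
    (p : EuclideanSpace ℝ (Fin 2)) (hp : p = ![x, y]) :
    (Matrix.of ![fun i => biunitSquare i 0, fun i => biunitSquare i 1,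
        fun i => (1 : ℝ),
        ![rho biunitSquare 0 p, -rho biunitSquare 1 p,
          rho biunitSquare 2 p, -rho biunitSquare 3 p]] :
        Matrix (Fin 4) (Fin 4) ℝ).mulVec
      ![(1 - x) * (1 - y) / 4, (1 + x) * (1 - y) / 4,
        (1 + x) * (1 + y) / 4, (1 - x) * (1 + y) / 4] = ![x, y, 1, 0] ∧
    ∀ φ : Fin 4 → ℝ,
      (Matrix.of ![fun i => biunitSquare i 0, fun i => biunitSquare i 1,
          fun i => (1 : ℝ),
          ![rho biunitSquare 0 p, -rho biunitSquare 1 p,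
            rho biunitSquare 2 p, -rho biunitSquare 3 p]] :
          Matrix (Fin 4) (Fin 4) ℝ).mulVec φ = ![x, y, 1, 0] →
      φ = ![(1 - x) * (1 - y) / 4, (1 + x) * (1 - y) / 4,
            (1 + x) * (1 + y) / 4, (1 - x) * (1 + y) / 4] := by
  obtain ⟨hx₁, hx₂⟩ := hx
  obtain ⟨hy₁, hy₂⟩ := hy
  obtain ⟨h0, h1, h2, h3⟩ := hdist_biunitSquare p
  simp only [show p 0 = x from congrFun hp 0, show p 1 = y from congrFun hp 1] at h0 h1 h2 h3
  rw [abs_of_pos (by linarith)] at h0 h1 h2 h3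
  simp only [rho_biunitSquare, Fin.reduceSub, h0, h1, h2, h3, biunitSquare_fst, biunitSquare_snd]
  exact ⟨(mulVec_eq_iff_eq_bilinear x y _).2 rfl, fun φ => (mulVec_eq_iff_eq_bilinear x y φ).1⟩
end
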